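/- Let U ⊆ ℝ² be open and Φ : U → S³ ⊂ ℝ⁴ a smooth conformal immersion into S³ with conformal factor e^λ, mean curvature H and trace-free Weingarten coefficient I⁰₁₁, satisfying the conformally constrained minimal surface equation H = e^{−4λ} I⁰₁₁ on U. Then the function u := e^{4λ} H satisfies the second order equation Δu = ∂_{x₁}(e^{2λ} ∂_{x₁}H) − ∂_{x₂}(e^{2λ} ∂_{x₂}H) on U, where Δ := ∂²_{x₁x₁} + ∂²_{x₂x₂}. -/

import Mathlib

noncomputable section

open Real MeasureTheory
open scoped ENNReal RealInnerProductSpace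

/-- The plane `ℝ²`. -/
abbrev RR2 := ℝ × ℝ
/-- Euclidean `ℝ⁴`. -/
abbrev RR4 := EuclideanSpace ℝ (Fin 4)

/-- Partial derivative in the `x₁` direction of an `ℝ⁴`-valued map on `ℝ²`. -/
def d1 (f : RR2 → RR4) (x : RR2) : RR4 := fderiv ℝ f x (1, 0)
/-- Partial derivative in the `x₂` direction of an `ℝ⁴`-valued map on `ℝ²`. -/
def d2 (f : RR2 → RR4) (x : RR2) : RR4 := fderiv ℝ f x (0, 1)
/-- Partial derivative in the `x₁` direction of a scalar map on `ℝ²`. -/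
def d1s (f : RR2 → ℝ) (x : RR2) : ℝ := fderiv ℝ f x (1, 0)
/-- Partial derivative in the `x₂` direction of a scalar map on `ℝ²`. -/
def d2s (f : RR2 → ℝ) (x : RR2) : ℝ := fderiv ℝ f x (0, 1)

/-- Determinant of four vectors of `ℝ⁴`. -/
def det4 (a b c d : RR4) : ℝ :=
  Matrix.det (Matrix.of ![(fun i => a i), (fun i => b i), (fun i => c i), (fun i => d i)])

/-- `Φ : U → S³ ⊂ ℝ⁴` is a smooth conformal immersion into `S³` with conformal factor
`e^lam` and (positively oriented) Gauss map `n`. -/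
structure IsConformalImmersionS3 (U : Set RR2) (Φ : RR2 → RR4) (lam : RR2 → ℝ)
    (n : RR2 → RR4) : Prop where
  smooth_Phi : ContDiffOn ℝ (⊤ : ℕ∞) Φ U
  smooth_lam : ContDiffOn ℝ (⊤ : ℕ∞) lam U
  smooth_n : ContDiffOn ℝ (⊤ : ℕ∞) n U
  mem_sphere : ∀ x ∈ U, ‖Φ x‖ = 1
  conf_orth : ∀ x ∈ U, ⟪d1 Φ x, d2 Φ x⟫ = 0
  conf_norm1 : ∀ x ∈ U, ‖d1 Φ x‖ = exp (lam x)
  conf_norm2 : ∀ x ∈ U, ‖d2 Φ x‖ = exp (lam x)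
  n_norm : ∀ x ∈ U, ‖n x‖ = 1
  n_orth_Phi : ∀ x ∈ U, ⟪n x, Φ x⟫ = 0
  n_orth_d1 : ∀ x ∈ U, ⟪n x, d1 Φ x⟫ = 0
  n_orth_d2 : ∀ x ∈ U, ⟪n x, d2 Φ x⟫ = 0
  oriented : ∀ x ∈ U, 0 < det4 (Φ x) (d1 Φ x) (d2 Φ x) (n x)

/-- Second fundamental form coefficient `I₁₁ = n·∂²_{x₁x₁}Φ`. -/
def I11 (Φ n : RR2 → RR4) (x : RR2) : ℝ := ⟪n x, d1 (d1 Φ) x⟫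
/-- Second fundamental form coefficient `I₁₂ = n·∂²_{x₁x₂}Φ`. -/
def I12 (Φ n : RR2 → RR4) (x : RR2) : ℝ := ⟪n x, d2 (d1 Φ) x⟫
/-- Second fundamental form coefficient `I₂₂ = n·∂²_{x₂x₂}Φ`. -/
def I22 (Φ n : RR2 → RR4) (x : RR2) : ℝ := ⟪n x, d2 (d2 Φ) x⟫

/-- Mean curvature `H = (1/2) e^{-2λ} (I₁₁ + I₂₂)`. -/
def meanCurv (Φ : RR2 → RR4) (lam : RR2 → ℝ) (n : RR2 → RR4) (x : RR2) : ℝ :=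
  (1 / 2) * exp (-(2 * lam x)) * (I11 Φ n x + I22 Φ n x)

/-- Trace-free Weingarten coefficient `I⁰₁₁ = (I₁₁ - I₂₂)/2`. -/
def I011 (Φ n : RR2 → RR4) (x : RR2) : ℝ := (I11 Φ n x - I22 Φ n x) / 2
/-- Trace-free Weingarten coefficient `I⁰₁₂ = I₁₂`. -/
def I012 (Φ n : RR2 → RR4) (x : RR2) : ℝ := I12 Φ n x

/-! Codazzi's equations for a surface in `S³`, obtained by expanding `∂n` in the orthogonal frame
`Φ, ∂₁Φ, ∂₂Φ, n` of `ℝ⁴`, read `e^{2λ} ∂₁H = ∂₁I⁰₁₁ + ∂₂I⁰₁₂` and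
`e^{2λ} ∂₂H = -∂₂I⁰₁₁ + ∂₁I⁰₁₂`. The constraint says exactly that `u = e^{4λ}H` equals `I⁰₁₁`, so
`∂₁(e^{2λ}∂₁H) - ∂₂(e^{2λ}∂₂H) = Δu + ∂₁∂₂I⁰₁₂ - ∂₂∂₁I⁰₁₂ = Δu`. -/

open scoped ContDiff

section Calculus

variable {E F G : Type*} [NormedAddCommGroup E] [NormedSpace ℝ E] [NormedAddCommGroup F]
  [NormedSpace ℝ F] [NormedAddCommGroup G] [InnerProductSpace ℝ G] {U : Set E} {x : E}

theorem ContDiffOn.differentiableAt_of_isOpen {f : E → F} {k : WithTop ℕ∞}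
    (hf : ContDiffOn ℝ k f U) (hU : IsOpen U) (hx : x ∈ U) (hk : k ≠ 0) :
    DifferentiableAt ℝ f x :=
  (hf.differentiableOn hk).differentiableAt (hU.mem_nhds hx)

theorem ContDiffOn.fderiv_apply_of_isOpen {f : E → F}
    (hf : ContDiffOn ℝ ∞ f U) (hU : IsOpen U) (v : E) :
    ContDiffOn ℝ ∞ (fun y => fderiv ℝ f y v) U :=
  (hf.fderiv_of_isOpen (m := ∞) hU le_rfl).clm_apply contDiffOn_const

theorem fderiv_eq_of_eqOn {f g : E → F} (hU : IsOpen U) (hx : x ∈ U)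
    (hfg : Set.EqOn f g U) : fderiv ℝ f x = fderiv ℝ g x :=
  (Filter.eventuallyEq_of_mem (hU.mem_nhds hx) hfg).fderiv_eq

theorem fderiv_fderiv_apply_comm {f : E → F} (hf : ContDiffOn ℝ ∞ f U)
    (hU : IsOpen U) (hx : x ∈ U) (v w : E) :
    fderiv ℝ (fun y => fderiv ℝ f y v) x w = fderiv ℝ (fun y => fderiv ℝ f y w) x v := by
  have hf' : ContDiffAt ℝ 2 f x :=
    (hf.contDiffAt (hU.mem_nhds hx)).of_le (WithTop.coe_le_coe.2 le_top)
  have hd : DifferentiableAt ℝ (fderiv ℝ f) x :=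
    (hf'.fderiv_right (m := 1) le_rfl).differentiableAt one_ne_zero
  rw [fderiv_clm_apply hd (differentiableAt_const v),
    fderiv_clm_apply hd (differentiableAt_const w)]
  simpa using (hf'.isSymmSndFDerivAt (by simp)) w v

theorem inner_fderiv_add_inner_fderiv_of_eqOn {f g : E → G} {φ : E → ℝ} (hU : IsOpen U)
    (hx : x ∈ U) (hf : DifferentiableAt ℝ f x) (hg : DifferentiableAt ℝ g x)
    (hfg : ∀ y ∈ U, ⟪f y, g y⟫ = φ y) (v : E) :
    ⟪f x, fderiv ℝ g x v⟫ + ⟪fderiv ℝ f x v, g x⟫ = fderiv ℝ φ x v := by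
  rw [← fderiv_inner_apply (𝕜 := ℝ) hf hg, fderiv_eq_of_eqOn hU hx hfg]

theorem inner_fderiv_add_inner_fderiv_eq_zero {f g : E → G} {c : ℝ} (hU : IsOpen U)
    (hx : x ∈ U) (hf : DifferentiableAt ℝ f x) (hg : DifferentiableAt ℝ g x)
    (hfg : ∀ y ∈ U, ⟪f y, g y⟫ = c) (v : E) :
    ⟪f x, fderiv ℝ g x v⟫ + ⟪fderiv ℝ f x v, g x⟫ = 0 := by
  simpa using inner_fderiv_add_inner_fderiv_of_eqOn hU hx hf hg hfg v

theorem inner_fderiv_eq_of_norm_eq {f : E → G} {ρ : E → ℝ} (hU : IsOpen U) (hx : x ∈ U)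
    (hf : DifferentiableAt ℝ f x) (hρ : DifferentiableAt ℝ ρ x) (hfρ : ∀ y ∈ U, ‖f y‖ = ρ y)
    (v : E) : ⟪f x, fderiv ℝ f x v⟫ = ρ x * fderiv ℝ ρ x v := by
  have h := inner_fderiv_add_inner_fderiv_of_eqOn (φ := fun y => ρ y * ρ y) hU hx hf hf
    (fun y hy => by rw [real_inner_self_eq_norm_mul_norm, hfρ y hy]) v
  rw [fderiv_fun_mul hρ hρ] at h
  simp only [add_apply, smul_apply, smul_eq_mul] at h
  linarith [real_inner_comm (f x) (fderiv ℝ f x v)]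

end Calculus

theorem sq_mul_inner_eq_of_orthogonal_frame {E : Type*} [NormedAddCommGroup E]
    [InnerProductSpace ℝ E] (hE : Module.finrank ℝ E = 4) {P E₁ E₂ N : E} {r : ℝ}
    (hr : 0 < r) (hP : ‖P‖ = 1) (hN : ‖N‖ = 1) (hE₁ : ‖E₁‖ = r) (hE₂ : ‖E₂‖ = r)
    (hPE₁ : ⟪P, E₁⟫ = 0) (hPE₂ : ⟪P, E₂⟫ = 0) (hPN : ⟪P, N⟫ = 0)
    (hE₁E₂ : ⟪E₁, E₂⟫ = 0) (hE₁N : ⟪E₁, N⟫ = 0) (hE₂N : ⟪E₂, N⟫ = 0)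
    {u : E} (huP : ⟪u, P⟫ = 0) (huN : ⟪u, N⟫ = 0) (w : E) :
    r ^ 2 * ⟪u, w⟫ = ⟪u, E₁⟫ * ⟪E₁, w⟫ + ⟪u, E₂⟫ * ⟪E₂, w⟫ := by
  have : FiniteDimensional ℝ E := .of_finrank_pos (by omega)
  have hframe : Orthonormal ℝ ![P, r⁻¹ • E₁, r⁻¹ • E₂, N] := by
    rw [orthonormal_iff_ite]
    intro i j
    fin_cases i <;> fin_cases j <;>
      simp [inner_smul_left, inner_smul_right, real_inner_comm, norm_smul, hP, hN, hE₁, hE₂,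
        hPE₁, hPE₂, hPN, hE₁E₂, hE₁N, hE₂N, abs_of_pos hr, hr.ne']
  let b := OrthonormalBasis.mk hframe
    (hframe.linearIndependent.span_eq_top_of_card_eq_finrank' (by simp [hE])).ge
  have h := b.sum_inner_mul_inner u w
  simp only [b, OrthonormalBasis.coe_mk, Fin.sum_univ_four, Matrix.cons_val_zero,
    Matrix.cons_val_one, Matrix.cons_val, inner_smul_right, inner_smul_left, map_inv₀,
    ringHom_apply, huP, huN, zero_mul, zero_add, add_zero] at h
  rw [← h]
  field_simp

/-- `I11`, `I12`, `I22` are its values at the coordinate vectors. -/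
def secondFundamentalForm (Φ n : RR2 → RR4) (v w : RR2) (x : RR2) : ℝ :=
  ⟪n x, fderiv ℝ (fun y => fderiv ℝ Φ y v) x w⟫

namespace IsConformalImmersionS3

variable {U : Set RR2} {Φ : RR2 → RR4} {lam : RR2 → ℝ} {n : RR2 → RR4} {x : RR2}

theorem inner_normal_fderiv (h : IsConformalImmersionS3 U Φ lam n) (hx : x ∈ U) (v : RR2) :
    ⟪n x, fderiv ℝ Φ x v⟫ = 0 := by
  have hv : v = v.1 • ((1 : ℝ), (0 : ℝ)) + v.2 • ((0 : ℝ), (1 : ℝ)) := by ext <;> simp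
  rw [hv, map_add, map_smul, map_smul, inner_add_right, inner_smul_right, inner_smul_right]
  have h₁ : ⟪n x, fderiv ℝ Φ x (1, 0)⟫ = 0 := h.n_orth_d1 x hx
  have h₂ : ⟪n x, fderiv ℝ Φ x (0, 1)⟫ = 0 := h.n_orth_d2 x hx
  simp [h₁, h₂]

theorem inner_position_fderiv (h : IsConformalImmersionS3 U Φ lam n) (hU : IsOpen U)
    (hx : x ∈ U) (v : RR2) : ⟪Φ x, fderiv ℝ Φ x v⟫ = 0 := by
  simpa using inner_fderiv_eq_of_norm_eq hU hx (h.smooth_Phi.differentiableAt_of_isOpen hU hx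
    (by simp)) (differentiableAt_const 1) h.mem_sphere v

theorem inner_normal_fderiv_normal (h : IsConformalImmersionS3 U Φ lam n) (hU : IsOpen U)
    (hx : x ∈ U) (v : RR2) : ⟪n x, fderiv ℝ n x v⟫ = 0 := by
  simpa using inner_fderiv_eq_of_norm_eq hU hx (h.smooth_n.differentiableAt_of_isOpen hU hx
    (by simp)) (differentiableAt_const 1) h.n_norm v

theorem inner_fderiv_normal_position (h : IsConformalImmersionS3 U Φ lam n) (hU : IsOpen U)
    (hx : x ∈ U) (v : RR2) : ⟪fderiv ℝ n x v, Φ x⟫ = 0 := by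
  have hd := inner_fderiv_add_inner_fderiv_eq_zero hU hx
    (h.smooth_n.differentiableAt_of_isOpen hU hx (by simp))
    (h.smooth_Phi.differentiableAt_of_isOpen hU hx (by simp)) h.n_orth_Phi v
  rwa [h.inner_normal_fderiv hx, zero_add] at hd

theorem inner_fderiv_normal_fderiv (h : IsConformalImmersionS3 U Φ lam n) (hU : IsOpen U)
    (hx : x ∈ U) (v w : RR2) :
    ⟪fderiv ℝ n x v, fderiv ℝ Φ x w⟫ = -secondFundamentalForm Φ n w v x := by
  have hd := inner_fderiv_add_inner_fderiv_eq_zero hU hx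
    (h.smooth_n.differentiableAt_of_isOpen hU hx (by simp))
    ((h.smooth_Phi.fderiv_apply_of_isOpen hU w).differentiableAt_of_isOpen hU hx (by simp))
    (fun y hy => h.inner_normal_fderiv hy w) v
  rw [secondFundamentalForm]
  linarith

theorem secondFundamentalForm_comm (h : IsConformalImmersionS3 U Φ lam n) (hU : IsOpen U)
    (hx : x ∈ U) (v w : RR2) :
    secondFundamentalForm Φ n v w x = secondFundamentalForm Φ n w v x := by
  rw [secondFundamentalForm, secondFundamentalForm,
    fderiv_fderiv_apply_comm h.smooth_Phi hU hx]

theorem contDiffOn_secondFundamentalForm (h : IsConformalImmersionS3 U Φ lam n)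
    (hU : IsOpen U) (v w : RR2) : ContDiffOn ℝ ∞ (secondFundamentalForm Φ n v w) U :=
  h.smooth_n.inner ℝ ((h.smooth_Phi.fderiv_apply_of_isOpen hU v).fderiv_apply_of_isOpen hU w)

theorem fderiv_secondFundamentalForm (h : IsConformalImmersionS3 U Φ lam n) (hU : IsOpen U)
    (hx : x ∈ U) (v w c : RR2) :
    fderiv ℝ (secondFundamentalForm Φ n v w) x c
      = ⟪n x, fderiv ℝ (fun y => fderiv ℝ (fun z => fderiv ℝ Φ z v) y w) x c⟫
        + ⟪fderiv ℝ n x c, fderiv ℝ (fun y => fderiv ℝ Φ y v) x w⟫ := by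
  have hΦvw := (h.smooth_Phi.fderiv_apply_of_isOpen hU v).fderiv_apply_of_isOpen hU w
  exact fderiv_inner_apply (𝕜 := ℝ) (h.smooth_n.differentiableAt_of_isOpen hU hx (by simp))
    (hΦvw.differentiableAt_of_isOpen hU hx (by simp)) c

theorem inner_fderiv_fderiv_of_norm_eq_exp (h : IsConformalImmersionS3 U Φ lam n)
    (hU : IsOpen U) (hx : x ∈ U) {a : RR2} (ha : ∀ y ∈ U, ‖fderiv ℝ Φ y a‖ = exp (lam y))
    (v : RR2) :
    ⟪fderiv ℝ Φ x a, fderiv ℝ (fun y => fderiv ℝ Φ y a) x v⟫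
      = exp (lam x) ^ 2 * fderiv ℝ lam x v := by
  have hlam := h.smooth_lam.differentiableAt_of_isOpen hU hx (by simp)
  rw [inner_fderiv_eq_of_norm_eq hU hx
    ((h.smooth_Phi.fderiv_apply_of_isOpen hU a).differentiableAt_of_isOpen hU hx (by simp))
    hlam.exp ha, fderiv_exp hlam]
  simp only [smul_apply, smul_eq_mul]
  ring

/-- `∂_v n` has no `Φ`- and no `n`-component, so Parseval's identity in the orthogonal frame
`Φ, ∂_a Φ, ∂_b Φ, n` of `ℝ⁴` keeps only two terms. -/
theorem exp_sq_mul_inner_fderiv_normal (h : IsConformalImmersionS3 U Φ lam n) (hU : IsOpen U)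
    (hx : x ∈ U) {a b : RR2} (hab : ⟪fderiv ℝ Φ x a, fderiv ℝ Φ x b⟫ = 0)
    (ha : ‖fderiv ℝ Φ x a‖ = exp (lam x)) (hb : ‖fderiv ℝ Φ x b‖ = exp (lam x)) (v : RR2)
    (w : RR4) :
    exp (lam x) ^ 2 * ⟪fderiv ℝ n x v, w⟫
      = ⟪fderiv ℝ n x v, fderiv ℝ Φ x a⟫ * ⟪fderiv ℝ Φ x a, w⟫
        + ⟪fderiv ℝ n x v, fderiv ℝ Φ x b⟫ * ⟪fderiv ℝ Φ x b, w⟫ :=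
  sq_mul_inner_eq_of_orthogonal_frame (E := RR4) finrank_euclideanSpace_fin (exp_pos _)
    (h.mem_sphere x hx) (h.n_norm x hx) ha hb (h.inner_position_fderiv hU hx a)
    (h.inner_position_fderiv hU hx b) (by rw [real_inner_comm]; exact h.n_orth_Phi x hx) hab
    (by rw [real_inner_comm]; exact h.inner_normal_fderiv hx a)
    (by rw [real_inner_comm]; exact h.inner_normal_fderiv hx b)
    (h.inner_fderiv_normal_position hU hx v)
    (by rw [real_inner_comm]; exact h.inner_normal_fderiv_normal hU hx v) w

theorem codazzi (h : IsConformalImmersionS3 U Φ lam n) (hU : IsOpen U) (hx : x ∈ U) {a b : RR2}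
    (hab : ∀ y ∈ U, ⟪fderiv ℝ Φ y a, fderiv ℝ Φ y b⟫ = 0)
    (ha : ∀ y ∈ U, ‖fderiv ℝ Φ y a‖ = exp (lam y)) (hb : ∀ y ∈ U, ‖fderiv ℝ Φ y b‖ = exp (lam y)) :
    fderiv ℝ (secondFundamentalForm Φ n a a) x b - fderiv ℝ (secondFundamentalForm Φ n a b) x a
      = (secondFundamentalForm Φ n a a x + secondFundamentalForm Φ n b b x)
        * fderiv ℝ lam x b := by
  have hΦa := h.smooth_Phi.fderiv_apply_of_isOpen hU a
  have hΦb := h.smooth_Phi.fderiv_apply_of_isOpen hU b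
  have hba : fderiv ℝ (fun y => fderiv ℝ Φ y b) x a = fderiv ℝ (fun y => fderiv ℝ Φ y a) x b :=
    fderiv_fderiv_apply_comm h.smooth_Phi hU hx b a
  have hFaa := h.exp_sq_mul_inner_fderiv_normal hU hx (hab x hx) (ha x hx) (hb x hx) b
    (fderiv ℝ (fun y => fderiv ℝ Φ y a) x a)
  have hFab := h.exp_sq_mul_inner_fderiv_normal hU hx (hab x hx) (ha x hx) (hb x hx) a
    (fderiv ℝ (fun y => fderiv ℝ Φ y a) x b)
  -- Christoffel symbols `⟪∂Φ, ∂∂Φ⟫` of the conformal metric `e^{2λ} (dx₁² + dx₂²)`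
  have hΓaa := h.inner_fderiv_fderiv_of_norm_eq_exp hU hx ha a
  have hΓab := h.inner_fderiv_fderiv_of_norm_eq_exp hU hx ha b
  have hΓba := h.inner_fderiv_fderiv_of_norm_eq_exp hU hx hb a
  have hcross := inner_fderiv_add_inner_fderiv_eq_zero hU hx
    (hΦa.differentiableAt_of_isOpen hU hx (by simp))
    (hΦb.differentiableAt_of_isOpen hU hx (by simp)) hab a
  rw [hba] at hΓba hcross
  rw [real_inner_comm (fderiv ℝ Φ x b)] at hcross
  simp only [h.inner_fderiv_normal_fderiv hU hx] at hFaa hFab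
  rw [h.secondFundamentalForm_comm hU hx b a] at hFab
  -- the third derivatives of `Φ` cancel
  rw [h.fderiv_secondFundamentalForm hU hx, h.fderiv_secondFundamentalForm hU hx,
    fderiv_fderiv_apply_comm hΦa hU hx a b]
  apply mul_left_cancel₀ (pow_ne_zero 2 (exp_pos (lam x)).ne')
  linear_combination hFaa - hFab - secondFundamentalForm Φ n a b x * hΓaa
    + secondFundamentalForm Φ n a b x * hΓba - secondFundamentalForm Φ n b b x * hcross
    + (secondFundamentalForm Φ n a a x + secondFundamentalForm Φ n b b x) * hΓab

theorem d2s_I11_sub_d1s_I12 (h : IsConformalImmersionS3 U Φ lam n) (hU : IsOpen U)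
    (hx : x ∈ U) :
    d2s (I11 Φ n) x - d1s (I12 Φ n) x = (I11 Φ n x + I22 Φ n x) * d2s lam x :=
  h.codazzi hU hx h.conf_orth h.conf_norm1 h.conf_norm2

theorem d1s_I22_sub_d2s_I12 (h : IsConformalImmersionS3 U Φ lam n) (hU : IsOpen U)
    (hx : x ∈ U) :
    d1s (I22 Φ n) x - d2s (I12 Φ n) x = (I11 Φ n x + I22 Φ n x) * d1s lam x := by
  have hc := h.codazzi hU hx (a := (0, 1)) (b := (1, 0))
    (fun y hy => by rw [real_inner_comm]; exact h.conf_orth y hy) h.conf_norm2 h.conf_norm1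
  rw [fderiv_eq_of_eqOn hU hx (fun y hy => h.secondFundamentalForm_comm hU hy (0, 1) (1, 0)),
    add_comm (secondFundamentalForm Φ n _ _ x)] at hc
  exact hc

theorem contDiffOn_I11 (h : IsConformalImmersionS3 U Φ lam n) (hU : IsOpen U) :
    ContDiffOn ℝ ∞ (I11 Φ n) U :=
  h.contDiffOn_secondFundamentalForm hU (1, 0) (1, 0)

theorem contDiffOn_I12 (h : IsConformalImmersionS3 U Φ lam n) (hU : IsOpen U) :
    ContDiffOn ℝ ∞ (I12 Φ n) U :=
  h.contDiffOn_secondFundamentalForm hU (1, 0) (0, 1)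

theorem contDiffOn_I22 (h : IsConformalImmersionS3 U Φ lam n) (hU : IsOpen U) :
    ContDiffOn ℝ ∞ (I22 Φ n) U :=
  h.contDiffOn_secondFundamentalForm hU (0, 1) (0, 1)

theorem contDiffOn_I011 (h : IsConformalImmersionS3 U Φ lam n) (hU : IsOpen U) :
    ContDiffOn ℝ ∞ (I011 Φ n) U :=
  ((h.contDiffOn_I11 hU).sub (h.contDiffOn_I22 hU)).div_const 2

theorem fderiv_I011 (h : IsConformalImmersionS3 U Φ lam n) (hU : IsOpen U) (hx : x ∈ U)
    (v : RR2) :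
    fderiv ℝ (I011 Φ n) x v = (fderiv ℝ (I11 Φ n) x v - fderiv ℝ (I22 Φ n) x v) / 2 := by
  have h₁₁ := (h.contDiffOn_I11 hU).differentiableAt_of_isOpen hU hx (by simp)
  have h₂₂ := (h.contDiffOn_I22 hU).differentiableAt_of_isOpen hU hx (by simp)
  have hI : HasFDerivAt (I011 Φ n) _ x :=
    (h₁₁.hasFDerivAt.sub h₂₂.hasFDerivAt).mul_const (2⁻¹ : ℝ)
  rw [hI.fderiv]
  simp only [smul_apply, sub_apply, smul_eq_mul]
  ring

theorem exp_mul_fderiv_meanCurv (h : IsConformalImmersionS3 U Φ lam n) (hU : IsOpen U)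
    (hx : x ∈ U) (v : RR2) :
    exp (2 * lam x) * fderiv ℝ (meanCurv Φ lam n) x v
      = (fderiv ℝ (I11 Φ n) x v + fderiv ℝ (I22 Φ n) x v) / 2
        - (I11 Φ n x + I22 Φ n x) * fderiv ℝ lam x v := by
  have hlam := (h.smooth_lam.differentiableAt_of_isOpen hU hx (by simp)).hasFDerivAt
  have h₁₁ := ((h.contDiffOn_I11 hU).differentiableAt_of_isOpen hU hx (by simp)).hasFDerivAt
  have h₂₂ := ((h.contDiffOn_I22 hU).differentiableAt_of_isOpen hU hx (by simp)).hasFDerivAt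
  have hH : HasFDerivAt (meanCurv Φ lam n) _ x :=
    ((((hlam.const_mul 2).neg).exp).const_mul (1 / 2)).mul (h₁₁.add h₂₂)
  rw [hH.fderiv]
  simp only [Pi.neg_apply, smul_add, smul_neg, add_apply, smul_apply, smul_eq_mul, neg_apply,
    exp_neg]
  field_simp
  ring

theorem exp_mul_d1s_meanCurv (h : IsConformalImmersionS3 U Φ lam n) (hU : IsOpen U)
    (hx : x ∈ U) :
    exp (2 * lam x) * d1s (meanCurv Φ lam n) x = d1s (I011 Φ n) x + d2s (I012 Φ n) x := by
  have hc := h.d1s_I22_sub_d2s_I12 hU hx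
  unfold d1s d2s at *
  rw [h.exp_mul_fderiv_meanCurv hU hx, h.fderiv_I011 hU hx, show I012 Φ n = I12 Φ n from rfl]
  linear_combination hc

theorem exp_mul_d2s_meanCurv (h : IsConformalImmersionS3 U Φ lam n) (hU : IsOpen U)
    (hx : x ∈ U) :
    exp (2 * lam x) * d2s (meanCurv Φ lam n) x = -d2s (I011 Φ n) x + d1s (I012 Φ n) x := by
  have hc := h.d2s_I11_sub_d1s_I12 hU hx
  unfold d1s d2s at *
  rw [h.exp_mul_fderiv_meanCurv hU hx, h.fderiv_I011 hU hx, show I012 Φ n = I12 Φ n from rfl]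
  linear_combination hc

end IsConformalImmersionS3

theorem d1s_d1s_add_d2s_d2s_eq_of_eqOn {U : Set RR2} {x : RR2} {f g u p q : RR2 → ℝ}
    (hU : IsOpen U) (hx : x ∈ U) (hf : ContDiffOn ℝ ∞ f U) (hg : ContDiffOn ℝ ∞ g U)
    (hu : Set.EqOn u f U) (hp : Set.EqOn p (fun y => d1s f y + d2s g y) U)
    (hq : Set.EqOn q (fun y => -d2s f y + d1s g y) U) :
    d1s (d1s u) x + d2s (d2s u) x = d1s p x - d2s q x := by
  have hdiff : ∀ (k : RR2 → ℝ), ContDiffOn ℝ ∞ k U → ∀ v : RR2,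
      DifferentiableAt ℝ (fun y => fderiv ℝ k y v) x := fun k hk v =>
    (hk.fderiv_apply_of_isOpen hU v).differentiableAt_of_isOpen hU hx (by simp)
  have hdu : ∀ v, Set.EqOn (fun y => fderiv ℝ u y v) (fun y => fderiv ℝ f y v) U :=
    fun v y hy => by simp only [fderiv_eq_of_eqOn hU hy hu]
  unfold d1s d2s at *
  rw [fderiv_eq_of_eqOn hU hx hp, fderiv_eq_of_eqOn hU hx hq, fderiv_eq_of_eqOn hU hx (hdu _),
    fderiv_eq_of_eqOn hU hx (hdu _), fderiv_fun_add (hdiff f hf _) (hdiff g hg _),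
    fderiv_fun_add (hdiff f hf _).fun_neg (hdiff g hg _), fderiv_fun_neg]
  simp only [add_apply, neg_apply]
  rw [fderiv_fderiv_apply_comm hg hU hx (0, 1) (1, 0)]
  ring

/-- If a smooth conformal immersion `Φ : U → S³` satisfies the
conformally constrained minimal surface equation `H = e^{-4λ} I⁰₁₁` on `U`, then
`u := e^{4λ}H` satisfies `Δu = ∂_{x₁}(e^{2λ}∂_{x₁}H) - ∂_{x₂}(e^{2λ}∂_{x₂}H)` on `U`. -/
theorem constrained_minimal_second_order_equation
    (U : Set RR2) (hU : IsOpen U)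
    (Φ : RR2 → RR4) (lam : RR2 → ℝ) (n : RR2 → RR4)
    (h : IsConformalImmersionS3 U Φ lam n)
    (hccms : ∀ x ∈ U, meanCurv Φ lam n x = exp (-(4 * lam x)) * I011 Φ n x) :
    ∀ x ∈ U,
      d1s (d1s (fun y => exp (4 * lam y) * meanCurv Φ lam n y)) x
        + d2s (d2s (fun y => exp (4 * lam y) * meanCurv Φ lam n y)) x
      = d1s (fun y => exp (2 * lam y) * d1s (meanCurv Φ lam n) y) x
        - d2s (fun y => exp (2 * lam y) * d2s (meanCurv Φ lam n) y) x := by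
  intro x hx
  have hu : Set.EqOn (fun y => exp (4 * lam y) * meanCurv Φ lam n y) (I011 Φ n) U :=
    fun y hy => by
      simp only [hccms y hy, ← mul_assoc, ← exp_add, add_neg_cancel, exp_zero, one_mul]
  exact d1s_d1s_add_d2s_d2s_eq_of_eqOn hU hx (h.contDiffOn_I011 hU) (h.contDiffOn_I12 hU) hu
    (fun y hy => h.exp_mul_d1s_meanCurv hU hy) (fun y hy => h.exp_mul_d2s_meanCurv hU hy)
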